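/- arXiv:2008.08853 — 4 statements merged into one kernel-verified Lean document; each statement's English description precedes it below -/
import Mathlib

section
/- The function g : (-1,1) × ℝ² → ℝ defined by g(ρ, x) = (x₁² - 2ρx₁x₂ + x₂²)/(1 - ρ²) is convex. -/
/-- Quadratic-over-linear convexity inequality (Cauchy–Schwarz). -/
lemma key_qol (t₁ t₂ y₁ y₂ a b : ℝ) (ht₁ : 0 < t₁) (ht₂ : 0 < t₂)
    (ha : 0 ≤ a) (hb : 0 ≤ b) (hab : a + b = 1) :
    (a * y₁ + b * y₂) ^ 2 / (a * t₁ + b * t₂) ≤ a * (y₁ ^ 2 / t₁) + b * (y₂ ^ 2 / t₂) := by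
  have ht : 0 < a * t₁ + b * t₂ := by
    rcases eq_or_lt_of_le ha with h | h
    · have hb1 : b = 1 := by linarith
      rw [← h, hb1]; linarith
    · nlinarith [mul_nonneg hb ht₂.le]
  rw [div_le_iff₀ ht]
  have h1 : a * (y₁ ^ 2 / t₁) = a * y₁ ^ 2 / t₁ := by ring
  have h2 : b * (y₂ ^ 2 / t₂) = b * y₂ ^ 2 / t₂ := by ring
  rw [h1, h2, div_add_div _ _ (ne_of_gt ht₁) (ne_of_gt ht₂), div_mul_eq_mul_div,
    le_div_iff₀ (by positivity)]
  nlinarith [mul_nonneg (mul_nonneg ha hb) (sq_nonneg (t₁ * y₂ - t₂ * y₁))]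

lemma decomp (ρ u v : ℝ) (h1 : (0:ℝ) < 1 - ρ) (h2 : (0:ℝ) < 1 + ρ) :
    (u ^ 2 - 2 * ρ * u * v + v ^ 2) / (1 - ρ ^ 2)
      = (1/2) * ((u - v) ^ 2 / (1 - ρ)) + (1/2) * ((u + v) ^ 2 / (1 + ρ)) := by
  have h12 : (1:ℝ) - ρ ^ 2 = (1 - ρ) * (1 + ρ) := by ring
  field_simp [h12]
  ring

theorem stmt_0 :
    ConvexOn ℝ {p : ℝ × ℝ × ℝ | p.1 ∈ Set.Ioo (-1 : ℝ) 1}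
      (fun p : ℝ × ℝ × ℝ =>
        (p.2.1 ^ 2 - 2 * p.1 * p.2.1 * p.2.2 + p.2.2 ^ 2) / (1 - p.1 ^ 2)) := by
  have hs : Convex ℝ {p : ℝ × ℝ × ℝ | p.1 ∈ Set.Ioo (-1 : ℝ) 1} :=
    (convex_Ioo (-1 : ℝ) 1).linear_preimage (LinearMap.fst ℝ ℝ (ℝ × ℝ))
  refine ⟨hs, ?_⟩
  rintro ⟨ρ₁, x₁, x₂⟩ hp ⟨ρ₂, y₁, y₂⟩ hq a b ha hb hab
  have hmem := hs hp hq ha hb hab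
  simp only [Set.mem_setOf_eq, Set.mem_Ioo, Prod.smul_mk, Prod.mk_add_mk, smul_eq_mul] at hp hq hmem ⊢
  obtain ⟨hp1, hp2⟩ := hp
  obtain ⟨hq1, hq2⟩ := hq
  obtain ⟨hm1, hm2⟩ := hmem
  rw [decomp _ _ _ (by linarith) (by linarith), decomp _ _ _ (by linarith) (by linarith),
    decomp _ _ _ (by linarith) (by linarith)]
  have k1 := key_qol (1 - ρ₁) (1 - ρ₂) (x₁ - x₂) (y₁ - y₂) a b (by linarith) (by linarith) ha hb hab
  have k2 := key_qol (1 + ρ₁) (1 + ρ₂) (x₁ + x₂) (y₁ + y₂) a b (by linarith) (by linarith) ha hb hab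
  have e1 : a * (x₁ - x₂) + b * (y₁ - y₂) = a * x₁ + b * y₁ - (a * x₂ + b * y₂) := by ring
  have e2 : a * (1 - ρ₁) + b * (1 - ρ₂) = 1 - (a * ρ₁ + b * ρ₂) := by linarith
  have e3 : a * (x₁ + x₂) + b * (y₁ + y₂) = a * x₁ + b * y₁ + (a * x₂ + b * y₂) := by ring
  have e4 : a * (1 + ρ₁) + b * (1 + ρ₂) = 1 + (a * ρ₁ + b * ρ₂) := by linarith
  rw [e1, e2] at k1
  rw [e3, e4] at k2
  linarith
end

section
/- Let F₀ = { f ∈ L²(0,1) : |f| < 1 a.e. } and define Ĵ(f) = ‖f - id‖²_{L²(0,1)} - (3/4)·⟨f - id, f + id⟩²_{L²(0,1)}, where id(y) = y. Then Ĵ(f) > 0 for all f ∈ F₀ with f ≠ id (as elements of L²). -/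
/-!
Write `B = ⟨f - id, f + id⟩ = ‖f‖² - 1/3`. For every real `l`,
`‖f - id‖² - l B + l²/3 = ∫₀¹ J_l(f y, y) dy` with `J_l(t, y) = (1-l) t² - 2 t y + (1+l+l²) y²`,
and at `l = 3B/2` the left side is `Ĵ(f)`; `‖f‖ < 1` gives `l < 1`.
For `l ≤ 0`, `(1-l) J_l(t, y) = ((1-l) t - y)² - l³ y² ≥ 0` vanishes for `y > 0` only at `t = y`,
so `f ≠ id` makes the integral positive.
For `0 < l < 1`, the minimum of `J_l(·, y)` over `t ≤ 1` (at the vertex `t = y / (1-l)` for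
`y ≤ 1 - l`, at `t = 1` beyond) is a continuous function of `y` with integral exactly `0`
over `(0, 1)`, and `f < 1` makes `J_l(f y, y)` exceed it strictly on `(1 - l, 1)`.
-/

open MeasureTheory Set

lemma integral_pos_of_ae_pos {α : Type*} [MeasurableSpace α] {μ : Measure α} [NeZero μ]
    {g : α → ℝ} (hg : Integrable g μ) (hpos : ∀ᵐ x ∂μ, 0 < g x) : 0 < ∫ x, g x ∂μ := by
  refine (integral_pos_iff_support_of_nonneg_ae (hpos.mono fun _ h => h.le) hg).2
    (pos_iff_ne_zero.2 fun h0 => NeZero.ne μ (ae_eq_bot.1 ?_))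
  rw [← Filter.eventually_false_iff_eq_bot]
  filter_upwards [hpos, measure_eq_zero_iff_ae_notMem.1 h0] with x hx hx0 using hx0 hx.ne'

instance : NeZero (volume.restrict (Ioo (0 : ℝ) 1)) :=
  ⟨by simp [Measure.restrict_eq_zero]⟩

lemma integral_sq_Ioo_zero_one : ∫ y in Ioo (0 : ℝ) 1, y ^ 2 = 1 / 3 := by
  rw [← integral_Ioc_eq_integral_Ioo, ← intervalIntegral.integral_of_le zero_le_one, integral_pow]
  norm_num

lemma integrableOn_sq_Ioo_zero_one : IntegrableOn (fun y : ℝ => y ^ 2) (Ioo 0 1) :=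
  (continuous_pow 2).integrableOn_Icc.mono_set Ioo_subset_Icc_self

section Quadratic

variable {f : ℝ → ℝ} (hf : MemLp f 2 (volume.restrict (Ioo 0 1)))
include hf

lemma integrableOn_mul_id : IntegrableOn (fun y => f y * y) (Ioo 0 1) := by
  refine (hf.integrable one_le_two).mul_bdd aestronglyMeasurable_id (c := 1) ?_
  filter_upwards [ae_restrict_mem measurableSet_Ioo] with y hy
  rw [Real.norm_eq_abs, abs_le]
  constructor <;> linarith [hy.1, hy.2]

lemma integrableOn_quadratic (a b c : ℝ) :
    IntegrableOn (fun y => a * f y ^ 2 + b * (f y * y) + c * y ^ 2) (Ioo 0 1) :=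
  ((hf.integrable_sq.const_mul a).fun_add ((integrableOn_mul_id hf).const_mul b)).fun_add
    (integrableOn_sq_Ioo_zero_one.const_mul c)

lemma integral_quadratic (a b c : ℝ) :
    ∫ y in Ioo 0 1, (a * f y ^ 2 + b * (f y * y) + c * y ^ 2) =
      a * (∫ y in Ioo 0 1, f y ^ 2) + b * (∫ y in Ioo 0 1, f y * y) + c / 3 := by
  rw [integral_add ((hf.integrable_sq.const_mul a).fun_add ((integrableOn_mul_id hf).const_mul b))
      (integrableOn_sq_Ioo_zero_one.const_mul c), integral_add (hf.integrable_sq.const_mul a)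
      ((integrableOn_mul_id hf).const_mul b), integral_const_mul, integral_const_mul,
    integral_const_mul, integral_sq_Ioo_zero_one]
  ring

end Quadratic

def jIntegrand (l t y : ℝ) : ℝ := (1 - l) * t ^ 2 + -2 * (t * y) + (1 + l + l ^ 2) * y ^ 2

noncomputable def jIntegrandLowerBound (l y : ℝ) : ℝ :=
  (1 - l) - 2 * y + (1 + l + l ^ 2) * y ^ 2 - max (1 - l - y) 0 ^ 2 / (1 - l)

section Pointwise

variable {l t y : ℝ}

lemma one_sub_mul_jIntegrand :
    (1 - l) * jIntegrand l t y = ((1 - l) * t - y) ^ 2 - l ^ 3 * y ^ 2 := by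
  unfold jIntegrand; ring

lemma jIntegrand_nonneg (hl : l ≤ 0) : 0 ≤ jIntegrand l t y := by
  rw [← mul_nonneg_iff_of_pos_left (by linarith : (0 : ℝ) < 1 - l), one_sub_mul_jIntegrand]
  nlinarith [sq_nonneg ((1 - l) * t - y), sq_nonneg y, Odd.pow_nonpos (n := 3) (by decide) hl]

lemma jIntegrand_pos (hl : l ≤ 0) (hy : 0 < y) (ht : t ≠ y) : 0 < jIntegrand l t y := by
  rw [← mul_pos_iff_of_pos_left (by linarith : (0 : ℝ) < 1 - l), one_sub_mul_jIntegrand]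
  rcases hl.lt_or_eq with hl | rfl
  · nlinarith [sq_nonneg ((1 - l) * t - y), pow_pos hy 2, Odd.pow_neg (n := 3) (by decide) hl]
  · simpa using sq_pos_of_ne_zero (sub_ne_zero.2 ht)

lemma jIntegrandLowerBound_le (hl : l < 1) (ht : t ≤ 1) :
    jIntegrandLowerBound l y ≤ jIntegrand l t y := by
  have hd : 0 < 1 - l := by linarith
  unfold jIntegrandLowerBound jIntegrand
  rcases le_total y (1 - l) with hy | hy
  · rw [max_eq_left (by linarith), sub_le_iff_le_add, ← sub_le_iff_le_add', le_div_iff₀ hd]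
    nlinarith [sq_nonneg ((1 - l) * t - y)]
  · rw [max_eq_right (by linarith), zero_pow two_ne_zero, zero_div, sub_zero]
    nlinarith [mul_nonneg (sub_nonneg.2 ht) (by nlinarith : 0 ≤ 2 * y - (1 - l) * (1 + t))]

lemma jIntegrandLowerBound_lt (hl : l < 1) (ht : t < 1) (hy : 1 - l < y) :
    jIntegrandLowerBound l y < jIntegrand l t y := by
  unfold jIntegrandLowerBound jIntegrand
  rw [max_eq_right (by linarith), zero_pow two_ne_zero, zero_div, sub_zero]
  nlinarith [mul_pos (sub_pos.2 ht) (by nlinarith : 0 < 2 * y - (1 - l) * (1 + t))]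

end Pointwise

lemma integral_max_sub_zero_sq {a b d : ℝ} (had : a ≤ d) (hdb : d ≤ b) :
    ∫ y in a..b, max (d - y) 0 ^ 2 = (d - a) ^ 3 / 3 := by
  have hi : Continuous fun y : ℝ => max (d - y) 0 ^ 2 := by fun_prop
  rw [← intervalIntegral.integral_add_adjacent_intervals (b := d) (hi.intervalIntegrable _ _)
    (hi.intervalIntegrable _ _)]
  have hleft : ∫ y in a..d, max (d - y) 0 ^ 2 = ∫ y in a..d, (d - y) ^ 2 :=
    intervalIntegral.integral_congr fun y hy => by
      rw [uIcc_of_le had] at hy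
      simp [hy.2]
  have hright : ∫ y in d..b, max (d - y) 0 ^ 2 = ∫ _ in d..b, (0 : ℝ) :=
    intervalIntegral.integral_congr fun y hy => by
      rw [uIcc_of_le hdb] at hy
      simp [hy.1]
  rw [hleft, hright, intervalIntegral.integral_comp_sub_left (fun y => y ^ 2), integral_pow]
  norm_num

lemma integral_jIntegrandLowerBound {l : ℝ} (hl0 : 0 ≤ l) (hl1 : l < 1) :
    ∫ y in (0 : ℝ)..1, jIntegrandLowerBound l y = 0 := by
  have hd : 1 - l ≠ 0 := by linarith
  unfold jIntegrandLowerBound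
  rw [intervalIntegral.integral_sub, intervalIntegral.integral_div,
    integral_max_sub_zero_sq (by linarith) (by linarith), intervalIntegral.integral_add,
    intervalIntegral.integral_sub, intervalIntegral.integral_const_mul,
    intervalIntegral.integral_const_mul, intervalIntegral.integral_const, integral_id, integral_pow,
    smul_eq_mul]
  · field_simp
    ring
  all_goals apply Continuous.intervalIntegrable; fun_prop

section Integral

variable {f : ℝ → ℝ} (hf : MemLp f 2 (volume.restrict (Ioo 0 1)))
include hf

lemma integrableOn_jIntegrand (l : ℝ) : IntegrableOn (fun y => jIntegrand l (f y) y) (Ioo 0 1) :=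
  integrableOn_quadratic hf _ _ _

lemma integral_jIntegrand_pos_of_nonpos {l : ℝ} (hl : l ≤ 0)
    (hne : ¬ f =ᵐ[volume.restrict (Ioo 0 1)] fun y => y) :
    0 < ∫ y in Ioo 0 1, jIntegrand l (f y) y := by
  have hnonneg : 0 ≤ᵐ[volume.restrict (Ioo 0 1)] fun y => jIntegrand l (f y) y :=
    ae_of_all _ fun _ => jIntegrand_nonneg hl
  refine (integral_nonneg_of_ae hnonneg).lt_of_ne fun h0 => hne ?_
  filter_upwards [(integral_eq_zero_iff_of_nonneg_ae hnonneg (integrableOn_jIntegrand hf l)).1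
    h0.symm, ae_restrict_mem measurableSet_Ioo] with y hy hmem
  by_contra hfy
  exact (jIntegrand_pos hl hmem.1 hfy).ne' hy

lemma integral_jIntegrand_pos_of_pos {l : ℝ} (hl0 : 0 < l) (hl1 : l < 1)
    (hlt : ∀ᵐ y ∂volume.restrict (Ioo 0 1), f y < 1) :
    0 < ∫ y in Ioo 0 1, jIntegrand l (f y) y := by
  set g := fun y => jIntegrand l (f y) y - jIntegrandLowerBound l y
  have hbound : IntegrableOn (jIntegrandLowerBound l) (Ioo 0 1) := by
    refine Continuous.integrableOn_Icc ?_ |>.mono_set Ioo_subset_Icc_self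
    unfold jIntegrandLowerBound
    fun_prop
  have hg : IntegrableOn g (Ioo 0 1) := (integrableOn_jIntegrand hf l).sub hbound
  have hg_nonneg : 0 ≤ᵐ[volume.restrict (Ioo 0 1)] g := by
    filter_upwards [hlt] with y hy using sub_nonneg.2 (jIntegrandLowerBound_le hl1 hy.le)
  have hg_pos : 0 < ∫ y in Ioo (1 - l) 1, g y := by
    have : NeZero (volume.restrict (Ioo (1 - l) 1)) :=
      ⟨by simp [Measure.restrict_eq_zero, hl0]⟩
    refine integral_pos_of_ae_pos (hg.mono_set (Ioo_subset_Ioo_left (by linarith))) ?_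
    filter_upwards [ae_restrict_of_ae_restrict_of_subset (Ioo_subset_Ioo_left (by linarith)) hlt,
      ae_restrict_mem measurableSet_Ioo] with y hy hmem
    exact sub_pos.2 (jIntegrandLowerBound_lt hl1 hy hmem.1)
  have hbound_zero : ∫ y in Ioo 0 1, jIntegrandLowerBound l y = 0 := by
    rw [← integral_Ioc_eq_integral_Ioo, ← intervalIntegral.integral_of_le zero_le_one,
      integral_jIntegrandLowerBound hl0.le hl1]
  have hmono := setIntegral_mono_set hg hg_nonneg
    (Ioo_subset_Ioo_left (by linarith : (0 : ℝ) ≤ 1 - l)).eventuallyLE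
  rw [integral_sub (integrableOn_jIntegrand hf l) hbound, hbound_zero, sub_zero] at hmono
  linarith

lemma integral_sq_lt_one (hbd : ∀ᵐ y ∂volume.restrict (Ioo 0 1), |f y| < 1) :
    ∫ y in Ioo 0 1, f y ^ 2 < 1 := by
  have hpos := integral_pos_of_ae_pos (g := fun y => 1 - f y ^ 2)
    ((integrable_const (1 : ℝ)).sub hf.integrable_sq)
    (hbd.mono fun y hy => sub_pos.2 ((sq_lt_one_iff_abs_lt_one _).2 hy))
  rw [integral_sub (integrable_const 1) hf.integrable_sq] at hpos
  simpa using hpos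

lemma integral_jIntegrand_pos {l : ℝ} (hl : l < 1)
    (hbd : ∀ᵐ y ∂volume.restrict (Ioo 0 1), |f y| < 1)
    (hne : ¬ f =ᵐ[volume.restrict (Ioo 0 1)] fun y => y) :
    0 < ∫ y in Ioo 0 1, jIntegrand l (f y) y := by
  rcases le_or_gt l 0 with hl0 | hl0
  · exact integral_jIntegrand_pos_of_nonpos hf hl0 hne
  · exact integral_jIntegrand_pos_of_pos hf hl0 hl (hbd.mono fun y hy => (abs_lt.1 hy).2)

end Integral

theorem stmt_4 (f : ℝ → ℝ)
    (hf : MemLp f 2 (volume.restrict (Set.Ioo (0 : ℝ) 1)))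
    (hbd : ∀ᵐ y ∂(volume.restrict (Set.Ioo (0 : ℝ) 1)), |f y| < 1)
    (hne : ¬ f =ᵐ[volume.restrict (Set.Ioo (0 : ℝ) 1)] fun y => y) :
    0 < (∫ y in Set.Ioo (0 : ℝ) 1, (f y - y) ^ 2) -
      3 / 4 * (∫ y in Set.Ioo (0 : ℝ) 1, (f y - y) * (f y + y)) ^ 2 := by
  have hA : ∫ y in Ioo 0 1, (f y - y) ^ 2 =
      ∫ y in Ioo 0 1, (1 * f y ^ 2 + -2 * (f y * y) + 1 * y ^ 2) := by
    congr 1 with y; ring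
  have hB : ∫ y in Ioo 0 1, (f y - y) * (f y + y) =
      ∫ y in Ioo 0 1, (1 * f y ^ 2 + 0 * (f y * y) + -1 * y ^ 2) := by
    congr 1 with y; ring
  rw [hA, hB, integral_quadratic hf, integral_quadratic hf]
  set M := ∫ y in Ioo 0 1, f y ^ 2
  have hl : 3 / 2 * (M - 1 / 3) < 1 := by linarith [integral_sq_lt_one hf hbd]
  have hJ := integral_jIntegrand_pos hf hl hbd hne
  simp only [jIntegrand] at hJ
  rw [integral_quadratic hf] at hJ
  linear_combination hJ
end

section
/- The smooth functional Ĵ : L²(0,1) → ℝ, Ĵ(f) = ‖f - id‖² - (3/4)(‖f‖² - 1/3)² has exactly two critical points, namely f = id and f = -2·id. -/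
open MeasureTheory

/-! Ĵ is studied with `id` replaced by any vector `a` with `‖a‖² = 1/3`. Its derivative at `f` is
`⟪∇Ĵ(f), ·⟫` with `∇Ĵ(f) = (2 - 3 S(f)) f - 2 a`. Since `a ≠ 0`, the coefficient of `f` cannot
vanish at a zero of the gradient, so every critical point is a multiple `t • a`; on that line
`∇Ĵ(t a) = -(t - 1)² (t + 2) a`, leaving `t = 1` and `t = -2`. -/

noncomputable section Energy

variable {E : Type*} [NormedAddCommGroup E] [InnerProductSpace ℝ E]

def energy (a u : E) : ℝ := ‖u - a‖ ^ 2 - 3 / 4 * (‖u‖ ^ 2 - 1 / 3) ^ 2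

def energyGrad (a f : E) : E := (2 - 3 * (‖f‖ ^ 2 - 1 / 3)) • f - (2 : ℝ) • a

theorem hasFDerivAt_energy (a f : E) :
    HasFDerivAt (energy a) (innerSL ℝ (energyGrad a f)) f := by
  have hdist := ((hasFDerivAt_id f).sub_const a).norm_sq
  have hpen := (((hasFDerivAt_id f).norm_sq.sub_const (1 / 3)).pow 2).const_mul (3 / 4 : ℝ)
  refine (hdist.sub hpen).congr_fderiv ?_
  ext h
  simp only [energyGrad, innerSL_apply_apply, sub_apply,
    smul_apply, ContinuousLinearMap.comp_apply, ContinuousLinearMap.id_apply,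
    inner_sub_left, real_inner_smul_left, smul_eq_mul, id]
  ring

theorem innerSL_eq_zero_iff {v : E} : innerSL ℝ v = 0 ↔ v = 0 := by
  rw [← norm_eq_zero, innerSL_apply_norm, norm_eq_zero]

variable {a : E}

theorem energyGrad_smul (ha : ‖a‖ ^ 2 = 1 / 3) (t : ℝ) :
    energyGrad a (t • a) = (-((t - 1) ^ 2 * (t + 2))) • a := by
  rw [energyGrad, norm_smul, mul_pow, Real.norm_eq_abs, sq_abs, ha, smul_smul, ← sub_smul]
  ring_nf

theorem exists_eq_smul_of_energyGrad_eq_zero (ha : a ≠ 0) {f : E} (hf : energyGrad a f = 0) :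
    ∃ t : ℝ, f = t • a := by
  set c : ℝ := 2 - 3 * (‖f‖ ^ 2 - 1 / 3)
  have hc : c • f = (2 : ℝ) • a := sub_eq_zero.mp hf
  have hc0 : c ≠ 0 := by
    rintro hc0
    rw [hc0, zero_smul, eq_comm, smul_eq_zero] at hc
    exact ha (hc.resolve_left two_ne_zero)
  exact ⟨c⁻¹ * 2, by rw [mul_smul, ← hc, inv_smul_smul₀ hc0]⟩

theorem energyGrad_eq_zero_iff (ha : ‖a‖ ^ 2 = 1 / 3) {f : E} :
    energyGrad a f = 0 ↔ f = a ∨ f = (-2 : ℝ) • a := by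
  have ha0 : a ≠ 0 := by rintro rfl; norm_num at ha
  constructor
  · intro hf
    obtain ⟨t, rfl⟩ := exists_eq_smul_of_energyGrad_eq_zero ha0 hf
    rw [energyGrad_smul ha, smul_eq_zero, neg_eq_zero, mul_eq_zero, pow_eq_zero_iff two_ne_zero,
      sub_eq_zero] at hf
    rcases hf with (rfl | ht) | ha0'
    · exact Or.inl (one_smul ℝ a)
    · exact Or.inr (by rw [eq_neg_of_add_eq_zero_left ht])
    · exact absurd ha0' ha0
  · rintro (rfl | rfl)
    · simpa using energyGrad_smul ha 1
    · simpa using energyGrad_smul ha (-2)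

theorem fderiv_energy_eq_zero_iff (ha : ‖a‖ ^ 2 = 1 / 3) (f : E) :
    fderiv ℝ (energy a) f = 0 ↔ f = a ∨ f = (-2 : ℝ) • a := by
  rw [(hasFDerivAt_energy a f).fderiv, innerSL_eq_zero_iff, energyGrad_eq_zero_iff ha]

end Energy

theorem norm_sq_Lp_eq_of_ae_eq_id
    {g : Lp ℝ 2 (volume.restrict (Set.Ioo (0 : ℝ) 1))}
    (hg : (g : ℝ → ℝ) =ᵐ[volume.restrict (Set.Ioo (0 : ℝ) 1)] fun y => y) :
    ‖g‖ ^ 2 = 1 / 3 := by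
  rw [← real_inner_self_eq_norm_sq, L2.inner_def]
  calc ∫ y, inner ℝ (g y) (g y) ∂volume.restrict (Set.Ioo (0 : ℝ) 1)
      = ∫ y in (0 : ℝ)..1, y ^ 2 := by
        rw [intervalIntegral.integral_of_le zero_le_one, ← Measure.restrict_congr_set Ioo_ae_eq_Ioc]
        refine integral_congr_ae ?_
        filter_upwards [hg] with y hy
        simp [hy, sq]
    _ = 1 / 3 := by norm_num [integral_pow]

theorem stmt_5
    (idL2 : Lp ℝ 2 (volume.restrict (Set.Ioo (0 : ℝ) 1)))
    (hid : (idL2 : ℝ → ℝ) =ᵐ[volume.restrict (Set.Ioo (0 : ℝ) 1)] fun y => y) :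
    ∀ f : Lp ℝ 2 (volume.restrict (Set.Ioo (0 : ℝ) 1)),
      fderiv ℝ (fun u : Lp ℝ 2 (volume.restrict (Set.Ioo (0 : ℝ) 1)) =>
          ‖u - idL2‖ ^ 2 - 3 / 4 * (‖u‖ ^ 2 - 1 / 3) ^ 2) f = 0 ↔
        f = idL2 ∨ f = (-2 : ℝ) • idL2 :=
  fderiv_energy_eq_zero_iff (norm_sq_Lp_eq_of_ae_eq_id hid)
end

section
/- Let f₀ ∈ L²(0,1) and a ∈ (0,1), and define f⋆ ∈ L²(0,1) by f⋆(y) = f₀(y/a) for y ∈ (0,a) and f⋆(y) = 1 for y ∈ (a,1). Then with Ĵ(f) = ‖f - id‖² - (3/4)(‖f‖² - 1/3)², one has Ĵ(f⋆) = a² Ĵ(f₀). -/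
/-!
On `(0, a)` the function `f⋆` is `f₀` compressed by the substitution `y = a x`, and on `(a, 1)` it
is `1`; splitting every integral at `a` gives `‖f⋆‖² = a‖f₀‖² + 1 - a` and
`⟨id, f⋆⟩ = a²⟨id, f₀⟩ + (1 - a²)/2`. Since `‖f - id‖² = ‖f‖² - 2⟨id, f⟩ + 1/3`, both sides of the
identity are polynomials in `a`, `‖f₀‖²` and `⟨id, f₀⟩`, and they agree.
-/

open MeasureTheory Set

theorem integral_Ioo_eq_intervalIntegral {E : Type*} [NormedAddCommGroup E] [NormedSpace ℝ E]
    {μ : Measure ℝ} [NullSingletonClass μ] {u v : ℝ} (huv : u ≤ v) (f : ℝ → E) :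
    ∫ x in Ioo u v, f x ∂μ = ∫ x in u..v, f x ∂μ := by
  rw [intervalIntegral.integral_of_le huv, integral_Ioc_eq_integral_Ioo]

theorem integral_sq_sub_id {f : ℝ → ℝ} (hf : IntervalIntegrable f volume 0 1)
    (hf2 : IntervalIntegrable (fun x => f x ^ 2) volume 0 1) :
    ∫ x in (0 : ℝ)..1, (f x - x) ^ 2 =
      (∫ x in (0 : ℝ)..1, f x ^ 2) - 2 * (∫ x in (0 : ℝ)..1, x * f x) + 1 / 3 := by
  have hxf : IntervalIntegrable (fun x => 2 * (x * f x)) volume 0 1 :=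
    (hf.continuousOn_mul continuousOn_id).const_mul 2
  have hx2 : IntervalIntegrable (fun x : ℝ => x ^ 2) volume 0 1 :=
    (continuous_pow 2).intervalIntegrable 0 1
  calc ∫ x in (0 : ℝ)..1, (f x - x) ^ 2
      = ∫ x in (0 : ℝ)..1, (f x ^ 2 - 2 * (x * f x) + x ^ 2) := by
        congr 1; ext x; ring
    _ = _ := by
        rw [intervalIntegral.integral_add (hf2.sub hxf) hx2,
          intervalIntegral.integral_sub hf2 hxf, intervalIntegral.integral_const_mul,
          integral_pow]
        norm_num

section Compress

variable {f₀ fstar : ℝ → ℝ} {a c : ℝ} (ha : a ∈ Ioo 0 1)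
  (hstar : ∀ y ∈ Ioo 0 1, fstar y = if y < a then f₀ (y / a) else c)
include ha hstar

theorem eqOn_compress_left : EqOn fstar (fun y => f₀ (y / a)) (Ioo 0 a) := fun y hy => by
  rw [hstar y ⟨hy.1, hy.2.trans ha.2⟩, if_pos hy.2]

theorem eqOn_compress_right : EqOn fstar (fun _ => c) (Ioo a 1) := fun y hy => by
  rw [hstar y ⟨ha.1.trans hy.1, hy.2⟩, if_neg (not_lt.2 hy.1.le)]

variable (Φ : ℝ → ℝ → ℝ)

theorem intervalIntegrable_comp_compress_left
    (h₀ : IntervalIntegrable (fun x => Φ (a * x) (f₀ x)) volume 0 1) :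
    IntervalIntegrable (fun y => Φ y (fstar y)) volume 0 a := by
  have hscaled := h₀.comp_mul_right (c := a⁻¹)
  rw [zero_div, one_div, inv_inv] at hscaled
  refine hscaled.congr_uIoo (fun y hy => ?_)
  rw [uIoo_of_le ha.1.le] at hy
  simp only [eqOn_compress_left ha hstar hy, ← div_eq_mul_inv, mul_div_cancel₀ y ha.1.ne']

theorem intervalIntegrable_comp_compress_right
    (h₁ : IntervalIntegrable (fun y => Φ y c) volume a 1) :
    IntervalIntegrable (fun y => Φ y (fstar y)) volume a 1 :=
  h₁.congr_uIoo fun y hy => by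
    rw [uIoo_of_le ha.2.le] at hy
    simp only [eqOn_compress_right ha hstar hy]

theorem intervalIntegrable_comp_compress
    (h₀ : IntervalIntegrable (fun x => Φ (a * x) (f₀ x)) volume 0 1)
    (h₁ : IntervalIntegrable (fun y => Φ y c) volume a 1) :
    IntervalIntegrable (fun y => Φ y (fstar y)) volume 0 1 :=
  (intervalIntegrable_comp_compress_left ha hstar Φ h₀).trans
    (intervalIntegrable_comp_compress_right ha hstar Φ h₁)

theorem integral_comp_compress
    (h₀ : IntervalIntegrable (fun x => Φ (a * x) (f₀ x)) volume 0 1)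
    (h₁ : IntervalIntegrable (fun y => Φ y c) volume a 1) :
    ∫ y in (0 : ℝ)..1, Φ y (fstar y) =
      a * (∫ x in (0 : ℝ)..1, Φ (a * x) (f₀ x)) + ∫ y in a..1, Φ y c := by
  rw [← intervalIntegral.integral_add_adjacent_intervals
    (intervalIntegrable_comp_compress_left ha hstar Φ h₀)
    (intervalIntegrable_comp_compress_right ha hstar Φ h₁)]
  congr 1
  · calc ∫ y in (0 : ℝ)..a, Φ y (fstar y)
        = ∫ y in (0 : ℝ)..a, Φ (a * (y / a)) (f₀ (y / a)) :=
          intervalIntegral.integral_congr_Ioo_of_le ha.1.le fun y hy => by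
            simp only [eqOn_compress_left ha hstar hy, mul_div_cancel₀ y ha.1.ne']
      _ = a * ∫ x in (0 : ℝ)..1, Φ (a * x) (f₀ x) := by
          rw [intervalIntegral.integral_comp_div (fun x => Φ (a * x) (f₀ x)) ha.1.ne',
            zero_div, div_self ha.1.ne', smul_eq_mul]
  · exact intervalIntegral.integral_congr_Ioo_of_le ha.2.le fun y hy => by
      simp only [eqOn_compress_right ha hstar hy]

end Compress

theorem stmt_7 (f₀ fstar : ℝ → ℝ) (a : ℝ) (ha : a ∈ Set.Ioo (0 : ℝ) 1)
    (hf₀ : MemLp f₀ 2 (volume.restrict (Set.Ioo (0 : ℝ) 1)))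
    (hstar : ∀ y ∈ Set.Ioo (0 : ℝ) 1, fstar y = if y < a then f₀ (y / a) else 1) :
    ((∫ y in Set.Ioo (0 : ℝ) 1, (fstar y - y) ^ 2) -
        3 / 4 * ((∫ y in Set.Ioo (0 : ℝ) 1, (fstar y) ^ 2) - 1 / 3) ^ 2) =
      a ^ 2 * ((∫ y in Set.Ioo (0 : ℝ) 1, (f₀ y - y) ^ 2) -
        3 / 4 * ((∫ y in Set.Ioo (0 : ℝ) 1, (f₀ y) ^ 2) - 1 / 3) ^ 2) := by
  have hf : IntervalIntegrable f₀ volume 0 1 :=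
    (intervalIntegrable_iff_integrableOn_Ioo_of_le zero_le_one).2 (hf₀.integrable one_le_two)
  have hf2 : IntervalIntegrable (fun x => f₀ x ^ 2) volume 0 1 :=
    (intervalIntegrable_iff_integrableOn_Ioo_of_le zero_le_one).2 hf₀.integrable_sq
  have hnorm : ∫ y in (0 : ℝ)..1, fstar y ^ 2 = a * (∫ x in (0 : ℝ)..1, f₀ x ^ 2) + (1 - a) := by
    rw [integral_comp_compress ha hstar (fun _ v => v ^ 2) hf2 intervalIntegrable_const]
    simp
  have hinner : ∫ y in (0 : ℝ)..1, y * fstar y =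
      a ^ 2 * (∫ x in (0 : ℝ)..1, x * f₀ x) + (1 - a ^ 2) / 2 := by
    rw [integral_comp_compress ha hstar (fun y v => y * v)
      (hf.continuousOn_mul (by fun_prop)) ((continuous_mul_const 1).intervalIntegrable _ _)]
    simp only [mul_one, mul_assoc, intervalIntegral.integral_const_mul, integral_id]
    ring
  simp only [integral_Ioo_eq_intervalIntegral zero_le_one]
  rw [integral_sq_sub_id hf hf2,
    integral_sq_sub_id (intervalIntegrable_comp_compress ha hstar (fun _ v => v) hf
      intervalIntegrable_const)
      (intervalIntegrable_comp_compress ha hstar (fun _ v => v ^ 2) hf2 intervalIntegrable_const),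
    hnorm, hinner]
  ring
end
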